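/- Let q be a real number, n ≥ 1 and r ≥ 1 integers, f : ℝ → ℝ twice continuously differentiable, and x a real number with 1+(q-1)x ≠ 0 and 1+(x-1)q ≠ 0. Then (D_{n+r}(D₋ₙf) - D₋ₙ(D_{n+r}f))(x) = (q-1)·q^{n-1}·(2n+r-1)·(D_{r+1}f)(x) - (q²+(2n+r-2)q+1)·q^{n-1}·(D_rf)(x) - q^{n-1}·(q²-q+1)·Σ_{k=1}^{r-1}(1-q)^k·(D_{r-k}f)(x) - (1-q)^r·q^{n-1}·(D₀f)(x). -/

import Mathlib

/-- The q-rational transition map. -/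
noncomputable def gq (q x : ℝ) : ℝ := (1 + (x - 1) * q) / (1 + (q - 1) * x)

/-- The deformed Witt operators: `D₀ f = (1+(x-1)q)(1+(q-1)x)·f'`,
`Dₙ f = g_q^{n-1}·(1+(x-1)q)·x·f'` for `n ≥ 1`, and
`D₋ₙ f = (q/g_q)^{n-1}·(1+(q-1)x)·f'` for `n ≥ 1`. -/
noncomputable def DW (q : ℝ) (n : ℤ) (f : ℝ → ℝ) (x : ℝ) : ℝ :=
  if n = 0 then (1 + (x - 1) * q) * (1 + (q - 1) * x) * deriv f x
  else if 0 < n then gq q x ^ (n - 1).toNat * ((1 + (x - 1) * q) * x * deriv f x)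
  else (q / gq q x) ^ (-n - 1).toNat * ((1 + (q - 1) * x) * deriv f x)


/-! Write `A = 1 + (x - 1) q`, `B = 1 + (q - 1) x`, `g = A / B` and `c = q² - q + 1`.
Every `Dₖ` is a first-order operator `f ↦ aₖ f'`, so the bracket is again first order, with
coefficient `a_{n+r} a'_{-n} - a_{-n} a'_{n+r}`: the `f''` terms cancel. Since `g' = c / B²`,
this coefficient equals `-q^{n-1} g^r ((2n+r-1) c x + A B)`. On the right-hand side the sum over
`k` is a geometric sum in `g` and `1 - q`, which collapses because `c x = (g - (1 - q)) B`. -/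

open Finset

lemma mul_sum_Icc_pow_mul_pow {R : Type*} [CommRing R] (a b : R) (s : ℕ) :
    (a - b) * ∑ k ∈ Icc 1 s, b ^ k * a ^ (s - k) = a ^ (s + 1) - b ^ (s + 1) - (a - b) * a ^ s := by
  have h := geom_sum₂_mul b a (s + 1)
  rw [range_eq_Ico, sum_eq_sum_Ico_succ_bot (Nat.succ_pos s), zero_add, Nat.succ_eq_add_one,
    Ico_add_one_right_eq_Icc] at h
  simp only [pow_zero, one_mul, Nat.add_sub_cancel, Nat.sub_zero] at h
  linear_combination -h

lemma mul_deriv_sub_mul_deriv {𝕜 : Type*} [NontriviallyNormedField 𝕜] {a b f : 𝕜 → 𝕜} {x : 𝕜}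
    (ha : DifferentiableAt 𝕜 a x) (hb : DifferentiableAt 𝕜 b x)
    (hf : DifferentiableAt 𝕜 (deriv f) x) :
    a x * deriv (fun y => b y * deriv f y) x - b x * deriv (fun y => a y * deriv f y) x
      = (a x * deriv b x - b x * deriv a x) * deriv f x := by
  rw [deriv_fun_mul hb hf, deriv_fun_mul ha hf]
  ring

lemma hasDerivAt_one_add_mul (c x : ℝ) : HasDerivAt (fun y => 1 + c * y) c x := by
  simpa using ((hasDerivAt_id x).const_mul c).const_add 1

lemma hasDerivAt_one_add_sub_one_mul (q x : ℝ) : HasDerivAt (fun y => 1 + (y - 1) * q) q x := by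
  simpa using (((hasDerivAt_id x).sub_const 1).mul_const q).const_add 1

noncomputable def wittCoeff (q : ℝ) (n : ℤ) (x : ℝ) : ℝ :=
  if n = 0 then (1 + (x - 1) * q) * (1 + (q - 1) * x)
  else if 0 < n then gq q x ^ (n - 1).toNat * ((1 + (x - 1) * q) * x)
  else (q / gq q x) ^ (-n - 1).toNat * (1 + (q - 1) * x)

lemma DW_eq_wittCoeff_mul_deriv (q : ℝ) (n : ℤ) (f : ℝ → ℝ) (x : ℝ) :
    DW q n f x = wittCoeff q n x * deriv f x := by
  unfold DW wittCoeff
  split_ifs <;> ring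

section

variable (q : ℝ)

lemma wittCoeff_zero : wittCoeff q 0 = fun x => (1 + (x - 1) * q) * (1 + (q - 1) * x) := by
  funext x
  simp [wittCoeff]

lemma wittCoeff_natCast_add_one (j : ℕ) :
    wittCoeff q ((j : ℤ) + 1) = fun x => gq q x ^ j * ((1 + (x - 1) * q) * x) := by
  funext x
  rw [wittCoeff, if_neg (by omega), if_pos (by omega)]
  simp

lemma wittCoeff_neg_natCast_sub_one (m : ℕ) :
    wittCoeff q (-(m : ℤ) - 1) = fun x => (q / gq q x) ^ m * (1 + (q - 1) * x) := by
  funext x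
  rw [wittCoeff, if_neg (by omega), if_neg (by omega)]
  simp

variable {q} {x : ℝ}

lemma gq_mul (hB : 1 + (q - 1) * x ≠ 0) : gq q x * (1 + (q - 1) * x) = 1 + (x - 1) * q :=
  div_mul_cancel₀ _ hB

lemma hasDerivAt_gq (hB : 1 + (q - 1) * x ≠ 0) :
    HasDerivAt (gq q) ((q ^ 2 - q + 1) / (1 + (q - 1) * x) ^ 2) x :=
  ((hasDerivAt_one_add_sub_one_mul q x).fun_div (hasDerivAt_one_add_mul (q - 1) x) hB).congr_deriv
    (by ring)

lemma hasDerivAt_wittCoeff_natCast_add_one (j : ℕ) (hB : 1 + (q - 1) * x ≠ 0) :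
    HasDerivAt (wittCoeff q ((j : ℤ) + 1))
      (gq q x ^ j * (j * (q ^ 2 - q + 1) * x / (1 + (q - 1) * x) + q * x + (1 + (x - 1) * q)))
      x := by
  rw [wittCoeff_natCast_add_one]
  refine (((hasDerivAt_gq hB).fun_pow j).fun_mul
    ((hasDerivAt_one_add_sub_one_mul q x).fun_mul (hasDerivAt_id x))).congr_deriv ?_
  rcases j with _ | j
  · simp
  · rw [id, Nat.add_sub_cancel, pow_succ (gq q x), ← gq_mul hB]
    field_simp
    ring

lemma hasDerivAt_wittCoeff_neg_natCast_sub_one (m : ℕ) (hA : 1 + (x - 1) * q ≠ 0)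
    (hB : 1 + (q - 1) * x ≠ 0) :
    HasDerivAt (wittCoeff q (-(m : ℤ) - 1))
      ((q / gq q x) ^ m * (q - 1 - m * (q ^ 2 - q + 1) / (1 + (x - 1) * q))) x := by
  have hg : gq q x ≠ 0 := div_ne_zero hA hB
  rw [wittCoeff_neg_natCast_sub_one]
  refine ((((hasDerivAt_const x q).fun_div (hasDerivAt_gq hB) hg).fun_pow m).fun_mul
    (hasDerivAt_one_add_mul (q - 1) x)).congr_deriv ?_
  rcases m with _ | m
  · simp
  · rw [Nat.add_sub_cancel, ← gq_mul hB]
    generalize gq q x = g at hg ⊢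
    rw [pow_succ (q / g)]
    field_simp
    ring

lemma differentiableAt_wittCoeff (k : ℤ) (hA : 1 + (x - 1) * q ≠ 0) (hB : 1 + (q - 1) * x ≠ 0) :
    DifferentiableAt ℝ (wittCoeff q k) x := by
  rcases lt_trichotomy k 0 with hk | rfl | hk
  · obtain ⟨m, rfl⟩ : ∃ m : ℕ, k = -(m : ℤ) - 1 := ⟨(-k - 1).toNat, by omega⟩
    exact (hasDerivAt_wittCoeff_neg_natCast_sub_one m hA hB).differentiableAt
  · rw [wittCoeff_zero]
    fun_prop
  · obtain ⟨j, rfl⟩ : ∃ j : ℕ, k = (j : ℤ) + 1 := ⟨(k - 1).toNat, by omega⟩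
    exact (hasDerivAt_wittCoeff_natCast_add_one j hB).differentiableAt

lemma wittCoeff_bracket_eq (m s : ℕ) (hA : 1 + (x - 1) * q ≠ 0) (hB : 1 + (q - 1) * x ≠ 0) :
    wittCoeff q (((m + s + 1 : ℕ) : ℤ) + 1) x * deriv (wittCoeff q (-(m : ℤ) - 1)) x
        - wittCoeff q (-(m : ℤ) - 1) x * deriv (wittCoeff q (((m + s + 1 : ℕ) : ℤ) + 1)) x
      = -(q ^ m * gq q x ^ (s + 1)
          * ((2 * m + s + 2) * (q ^ 2 - q + 1) * x + (1 + (x - 1) * q) * (1 + (q - 1) * x))) := by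
  have hg : gq q x ≠ 0 := div_ne_zero hA hB
  have hpow : (q / gq q x) ^ m * gq q x ^ (m + s + 1) = q ^ m * gq q x ^ (s + 1) := by
    rw [div_pow, add_assoc, pow_add]
    field_simp
  rw [(hasDerivAt_wittCoeff_natCast_add_one _ hB).deriv,
    (hasDerivAt_wittCoeff_neg_natCast_sub_one m hA hB).deriv, wittCoeff_natCast_add_one,
    wittCoeff_neg_natCast_sub_one]
  push_cast
  -- `(q / g)^m g^(m+s+1) = q^m g^(s+1)`, and then `x ((q-1) A - q B) = -(q²-q+1) x`.
  linear_combination ((1 + (x - 1) * q) * x * (q - 1)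
      - (1 + (x - 1) * q) * x * (m * (q ^ 2 - q + 1) / (1 + (x - 1) * q))
      - (1 + (q - 1) * x) * ((m + s + 1) * (q ^ 2 - q + 1) * x / (1 + (q - 1) * x))
      - (1 + (q - 1) * x) * (q * x + (1 + (x - 1) * q))) * hpow
    - q ^ m * gq q x ^ (s + 1) * x * m * (q ^ 2 - q + 1) * mul_inv_cancel₀ hA
    - q ^ m * gq q x ^ (s + 1) * x * (m + s + 1) * (q ^ 2 - q + 1) * mul_inv_cancel₀ hB

lemma mul_sum_Icc_wittCoeff (s : ℕ) (hB : 1 + (q - 1) * x ≠ 0) :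
    (q ^ 2 - q + 1) * ∑ k ∈ Icc 1 s, (1 - q) ^ k * wittCoeff q ((s : ℤ) + 1 - k) x
      = (1 + (x - 1) * q) * (1 + (q - 1) * x) * (gq q x ^ (s + 1) - (1 - q) ^ (s + 1))
        - (q ^ 2 - q + 1) * x * (1 + (x - 1) * q) * gq q x ^ s := by
  have hterm : ∀ k ∈ Icc 1 s, (1 - q) ^ k * wittCoeff q ((s : ℤ) + 1 - k) x
      = (1 + (x - 1) * q) * x * ((1 - q) ^ k * gq q x ^ (s - k)) := by
    intro k hk
    have hks : ((s : ℤ) + 1 - k) = ((s - k : ℕ) : ℤ) + 1 := by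
      have := (mem_Icc.mp hk).2
      push_cast [this]
      ring
    rw [hks, wittCoeff_natCast_add_one]
    ring
  have hgeom := mul_sum_Icc_pow_mul_pow (gq q x) (1 - q) s
  have hcx : (q ^ 2 - q + 1) * x = (gq q x - (1 - q)) * (1 + (q - 1) * x) := by
    rw [sub_mul, gq_mul hB]
    ring
  rw [sum_congr rfl hterm, ← mul_sum]
  linear_combination (1 + (x - 1) * q) * (1 + (q - 1) * x) * hgeom
    + (1 + (x - 1) * q) * (∑ k ∈ Icc 1 s, (1 - q) ^ k * gq q x ^ (s - k) + gq q x ^ s) * hcx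

lemma wittCoeff_bracket (n r : ℕ) (hn : 1 ≤ n) (hr : 1 ≤ r) (hA : 1 + (x - 1) * q ≠ 0)
    (hB : 1 + (q - 1) * x ≠ 0) :
    wittCoeff q ((n : ℤ) + r) x * deriv (wittCoeff q (-(n : ℤ))) x
        - wittCoeff q (-(n : ℤ)) x * deriv (wittCoeff q ((n : ℤ) + r)) x
      = (q - 1) * q ^ (n - 1) * (2 * (n : ℝ) + r - 1) * wittCoeff q ((r : ℤ) + 1) x
        - (q ^ 2 + (2 * (n : ℝ) + r - 2) * q + 1) * q ^ (n - 1) * wittCoeff q r x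
        - q ^ (n - 1) * (q ^ 2 - q + 1) *
            ∑ k ∈ Icc 1 (r - 1), (1 - q) ^ k * wittCoeff q ((r : ℤ) - k) x
        - (1 - q) ^ r * q ^ (n - 1) * wittCoeff q 0 x := by
  obtain ⟨m, rfl⟩ : ∃ m, n = m + 1 := ⟨n - 1, by omega⟩
  obtain ⟨s, rfl⟩ : ∃ s, r = s + 1 := ⟨r - 1, by omega⟩
  have hsum := mul_sum_Icc_wittCoeff s hB
  have hpos : ((m + 1 : ℕ) : ℤ) + ((s + 1 : ℕ) : ℤ) = ((m + s + 1 : ℕ) : ℤ) + 1 := by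
    push_cast
    ring
  have hneg : -((m + 1 : ℕ) : ℤ) = -(m : ℤ) - 1 := by
    push_cast
    ring
  rw [hpos, hneg, wittCoeff_bracket_eq m s hA hB, wittCoeff_natCast_add_one q (s + 1),
    wittCoeff_zero, Nat.add_sub_cancel, Nat.add_sub_cancel]
  push_cast
  rw [wittCoeff_natCast_add_one q s]
  linear_combination q ^ m * hsum - q ^ (m + 1) * (2 * m + s + 2) * gq q x ^ s * x * gq_mul hB

end

/-- The deformed Witt bracket `[Dₙ₊ᵣ, D₋ₙ]`. -/
theorem deformed_witt_Dnr_Dmn (q : ℝ) (n r : ℕ) (hn : 1 ≤ n) (hr : 1 ≤ r)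
    (f : ℝ → ℝ) (hf : ContDiff ℝ 2 f) (x : ℝ)
    (hx1 : 1 + (q - 1) * x ≠ 0) (hx2 : 1 + (x - 1) * q ≠ 0) :
    DW q ((n : ℤ) + r) (fun y => DW q (-(n : ℤ)) f y) x
        - DW q (-(n : ℤ)) (fun y => DW q ((n : ℤ) + r) f y) x
      = (q - 1) * q ^ (n - 1) * (2 * (n : ℝ) + r - 1) * DW q ((r : ℤ) + 1) f x
        - (q ^ 2 + (2 * (n : ℝ) + r - 2) * q + 1) * q ^ (n - 1) * DW q r f x
        - q ^ (n - 1) * (q ^ 2 - q + 1) *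
            ∑ k ∈ Finset.Icc 1 (r - 1), (1 - q) ^ k * DW q ((r : ℤ) - k) f x
        - (1 - q) ^ r * q ^ (n - 1) * DW q 0 f x := by
  simp only [DW_eq_wittCoeff_mul_deriv]
  rw [mul_deriv_sub_mul_deriv (differentiableAt_wittCoeff _ hx2 hx1)
      (differentiableAt_wittCoeff _ hx2 hx1) (hf.differentiable_deriv_two x),
    wittCoeff_bracket n r hn hr hx2 hx1]
  simp only [← mul_assoc, ← Finset.sum_mul]
  ring
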